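/- Let (Ω₂,ℙ₂) be a probability space, let (W_n) be a sequence of P-variables W_n : [0,1] × [0,1] × Ω₂ → ℝ ([0,1] with Lebesgue measure), and let (W̃_n) be the sequence of associated probability graphons. If (W̃_n) is a Cauchy sequence with respect to the unlabelled cut distance δ_□, then (W_n) is a Cauchy sequence with respect to the P-variables metric d_M. -/

import Mathlib

set_option autoImplicit false

open MeasureTheory Set
open scoped ENNReal NNReal

noncomputable section

/-- `ℝ^n` with the Euclidean metric. -/
abbrev RE (n : ℕ) : Type := EuclideanSpace ℝ (Fin n)

/-- The random vector `(f₁(x₁), f₁(x₂), …, f_k(x₁), f_k(x₂), W(x₁,x₂,x₁₂))`. -/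
def sVec {Ω₁ Ω₂ : Type*} (k : ℕ) (f : Fin k → Ω₁ → ℝ)
    (W : Ω₁ × Ω₁ × Ω₂ → ℝ) (x : Ω₁ × Ω₁ × Ω₂) : RE (2 * k + 1) :=
  (WithLp.equiv 2 (Fin (2 * k + 1) → ℝ)).symm fun i =>
    if _ : (i : ℕ) < 2 * k then
      if (i : ℕ) % 2 = 0 then f ⟨(i : ℕ) / 2, by omega⟩ x.1
      else f ⟨(i : ℕ) / 2, by omega⟩ x.2.1
    else W x

/-- `S(f₁,…,f_k,W)`: the pushforward of the product measure `P₁ ⊗ P₁ ⊗ P₂` under `sVec`. -/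
def Smeasure {Ω₁ Ω₂ : Type*} [MeasurableSpace Ω₁] [MeasurableSpace Ω₂]
    (P₁ : Measure Ω₁) (P₂ : Measure Ω₂) {k : ℕ} (f : Fin k → Ω₁ → ℝ)
    (W : Ω₁ × Ω₁ × Ω₂ → ℝ) : Measure (RE (2 * k + 1)) :=
  (P₁.prod (P₁.prod P₂)).map (sVec k f W)

/-- The `k`-profile `S_k(W)`. -/
def SkSet {Ω₁ Ω₂ : Type*} [MeasurableSpace Ω₁] [MeasurableSpace Ω₂]
    (P₁ : Measure Ω₁) (P₂ : Measure Ω₂) (k : ℕ)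
    (W : Ω₁ × Ω₁ × Ω₂ → ℝ) : Set (Measure (RE (2 * k + 1))) :=
  {μ | ∃ f : Fin k → Ω₁ → ℝ, (∀ i, Measurable (f i)) ∧
    (∀ i x, f i x ∈ Icc (-1 : ℝ) 1) ∧ μ = Smeasure P₁ P₂ f W}

/-- A function partition: `{0,1}`-valued measurable functions summing to `1`. -/
def IsFunctionPartition {Ω₁ : Type*} [MeasurableSpace Ω₁] {k : ℕ}
    (f : Fin k → Ω₁ → ℝ) : Prop :=
  (∀ i, Measurable (f i)) ∧ (∀ i x, f i x = 0 ∨ f i x = 1) ∧ ∀ x, ∑ i, f i x = 1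

/-- The restricted `k`-profile `S'_k(W)`. -/
def SkSet' {Ω₁ Ω₂ : Type*} [MeasurableSpace Ω₁] [MeasurableSpace Ω₂]
    (P₁ : Measure Ω₁) (P₂ : Measure Ω₂) (k : ℕ)
    (W : Ω₁ × Ω₁ × Ω₂ → ℝ) : Set (Measure (RE (2 * k + 1))) :=
  {μ | ∃ f : Fin k → Ω₁ → ℝ, IsFunctionPartition f ∧ μ = Smeasure P₁ P₂ f W}

/-- Hausdorff edistance (w.r.t. the Lévy–Prokhorov distance) between sets of measures. -/
def eHausLP {X : Type*} [MeasurableSpace X] [PseudoEMetricSpace X]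
    (A B : Set (Measure X)) : ℝ≥0∞ :=
  max (⨆ μ ∈ A, ⨅ ν ∈ B, levyProkhorovEDist μ ν)
      (⨆ ν ∈ B, ⨅ μ ∈ A, levyProkhorovEDist μ ν)

/-- Hausdorff distance (w.r.t. the Lévy–Prokhorov distance) between sets of measures. -/
def dHLP {X : Type*} [MeasurableSpace X] [PseudoEMetricSpace X]
    (A B : Set (Measure X)) : ℝ := (eHausLP A B).toReal

/-- A `P`-variable: a measurable real-valued function on a product `Ω₁ × Ω₁ × Ω₂`
of probability spaces. -/
structure PVar where
  (Ω₁ : Type*)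
  (Ω₂ : Type*)
  [m₁ : MeasurableSpace Ω₁]
  [m₂ : MeasurableSpace Ω₂]
  (P₁ : Measure Ω₁)
  (P₂ : Measure Ω₂)
  (prob₁ : IsProbabilityMeasure P₁)
  (prob₂ : IsProbabilityMeasure P₂)
  (W : Ω₁ × Ω₁ × Ω₂ → ℝ)
  (meas : Measurable W)

attribute [instance] PVar.m₁ PVar.m₂

/-- The underlying product probability measure of a `P`-variable. -/
def PVar.vol (V : PVar) : Measure (V.Ω₁ × V.Ω₁ × V.Ω₂) := V.P₁.prod (V.P₁.prod V.P₂)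

/-- The `k`-profile of a `P`-variable. -/
def PVar.Sk (V : PVar) (k : ℕ) : Set (Measure (RE (2 * k + 1))) := SkSet V.P₁ V.P₂ k V.W

/-- The restricted `k`-profile of a `P`-variable. -/
def PVar.Sk' (V : PVar) (k : ℕ) : Set (Measure (RE (2 * k + 1))) := SkSet' V.P₁ V.P₂ k V.W

/-- The `P`-variables metric `d_M`. -/
def dM (V U : PVar) : ℝ :=
  ∑' k : ℕ, (2 : ℝ)⁻¹ ^ (k + 1) * dHLP (V.Sk (k + 1)) (U.Sk (k + 1))


/-- The probability graphon (Markov kernel `[0,1]² → 𝒫(ℝ)`) associated to a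
P-variable on `[0,1] × [0,1] × Ω₂`: `W̃(x₁,x₂;·)` is the law of `W(x₁,x₂,·)`. -/
def assocGraphon {Ω₂ : Type*} [MeasurableSpace Ω₂] (P₂ : Measure Ω₂)
    (W : unitInterval × unitInterval × Ω₂ → ℝ)
    (x : unitInterval × unitInterval) : Measure ℝ :=
  P₂.map fun ω => W (x.1, x.2, ω)

/-- `W̃(A;·) = ∫_A W̃(x,y;·) dx dy` for measurable `A ⊆ [0,1]²`. -/
def graphonInt (K : unitInterval × unitInterval → Measure ℝ)
    (A : Set (unitInterval × unitInterval)) : Measure ℝ :=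
  (((volume : Measure unitInterval).prod volume).restrict A).bind K

/-- The cut semidistance `d_□` between two probability graphons on `[0,1]`:
`sup_{S,T} d_LP(K(S×T;·), L(S×T;·))` over measurable `S, T ⊆ [0,1]`. -/
def cutDistKer (K L : unitInterval × unitInterval → Measure ℝ) : ℝ :=
  ⨆ p : {S : Set unitInterval // MeasurableSet S} ×
        {T : Set unitInterval // MeasurableSet T},
    levyProkhorovDist (graphonInt K (p.1.1 ×ˢ p.2.1)) (graphonInt L (p.1.1 ×ˢ p.2.1))

/-- The unlabelled cut distance `δ_□`: infimum of `d_□(K, L∘(φ×φ))` over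
Lebesgue-measure-preserving bijections `φ` of `[0,1]`. -/
def unlabCutDist (K L : unitInterval × unitInterval → Measure ℝ) : ℝ :=
  ⨅ φ : {φ : unitInterval ≃ᵐ unitInterval //
          MeasurePreserving φ (volume : Measure unitInterval) volume},
    cutDistKer K fun x => L (φ.1 x.1, φ.1 x.2)

/-- A P-variable on `[0,1] × [0,1] × Ω₂` (with Lebesgue measure on `[0,1]`),
bundled as a `PVar`. -/
def PVar.ofUnitInterval {Ω₂ : Type*} [MeasurableSpace Ω₂] (P₂ : Measure Ω₂)
    [h₂ : IsProbabilityMeasure P₂] (W : unitInterval × unitInterval × Ω₂ → ℝ)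
    (hW : Measurable W) : PVar :=
  ⟨unitInterval, Ω₂, (volume : Measure unitInterval), P₂, inferInstance, h₂, W, hW⟩


/-!
Relabelling by a measure-preserving bijection of `[0,1]` does not change any profile `S_k`, so it
suffices to show that each `W ↦ S_k(W)` is uniformly continuous from the cut distance to the
Hausdorff distance `d_H`; the weights `2^{-k}` take care of the tail of `d_M`.

Rounding a test function `f` with values in `[-1,1]` to a grid of mesh `1/M` moves each point of
the random vector `(f(x₁), f(x₂), …, W(x₁,x₂,x₁₂))` by at most `√(2k+1)/M`, hence moves `S(f,W)` by
at most that much in Lévy–Prokhorov distance. For the rounded `f`, the measure `S(f,W)` is a finite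
sum, over pairs `(S,T)` of level sets of the rounded `f`, of pushforwards of `W̃(S×T;·)` under an
isometric embedding `ℝ → ℝ^{2k+1}`. The Lévy–Prokhorov distance is subadditive on sums and does not
increase under `1`-Lipschitz maps, so `d_LP(S(f,U), S(f,V))` is at most the number of cells times
`d_□(Ũ,Ṽ)`.
-/

namespace MeasureTheory

open Metric

variable {Ω : Type*} [MeasurableSpace Ω] [PseudoEMetricSpace Ω]

lemma levyProkhorovEDist_add_le (μ₁ μ₂ ν₁ ν₂ : Measure Ω) :
    levyProkhorovEDist (μ₁ + μ₂) (ν₁ + ν₂) ≤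
      levyProkhorovEDist μ₁ ν₁ + levyProkhorovEDist μ₂ ν₂ := by
  set a := levyProkhorovEDist μ₁ ν₁
  set b := levyProkhorovEDist μ₂ ν₂
  by_cases hab : a + b = ∞
  · simp [hab]
  have ha : a ≠ ∞ := (ENNReal.add_ne_top.1 hab).1
  have hb : b ≠ ∞ := (ENNReal.add_ne_top.1 hab).2
  apply levyProkhorovEDist_le_of_forall_add_pos_le
  intro x B hx hx_top hB
  have hx2 : x / 2 ≠ 0 := by simp [hx.ne']
  have hsum : a + x / 2 + (b + x / 2) = a + b + x := by
    rw [add_add_add_comm, ENNReal.add_halves]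
  have hthick : ∀ c, c ≤ a + b + x → thickening c.toReal B ⊆ thickening (a + b + x).toReal B :=
    fun c hc => thickening_mono (ENNReal.toReal_mono (by finiteness) hc) B
  have hle₁ : a + x / 2 ≤ a + b + x := hsum ▸ le_self_add
  have hle₂ : b + x / 2 ≤ a + b + x := hsum ▸ le_add_self
  have hlt₁ : a < a + x / 2 := ENNReal.lt_add_right ha hx2
  have hlt₂ : b < b + x / 2 := ENNReal.lt_add_right hb hx2
  have combine : ∀ {ρ₁ ρ₂ σ₁ σ₂ : Measure Ω},
      ρ₁ B ≤ σ₁ (thickening (a + x / 2).toReal B) + (a + x / 2) →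
      ρ₂ B ≤ σ₂ (thickening (b + x / 2).toReal B) + (b + x / 2) →
      (ρ₁ + ρ₂) B ≤ (σ₁ + σ₂) (thickening (a + b + x).toReal B) + (a + b) + x := by
    intro ρ₁ ρ₂ σ₁ σ₂ h₁ h₂
    calc (ρ₁ + ρ₂) B
        ≤ σ₁ (thickening (a + x / 2).toReal B) + σ₂ (thickening (b + x / 2).toReal B) +
            (a + x / 2 + (b + x / 2)) := by
          rw [Measure.add_apply]
          exact (add_le_add h₁ h₂).trans_eq (add_add_add_comm _ _ _ _)
      _ ≤ (σ₁ + σ₂) (thickening (a + b + x).toReal B) + (a + b) + x := by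
          rw [Measure.add_apply, hsum, add_assoc _ (a + b) x]
          exact add_le_add (add_le_add (measure_mono (hthick _ hle₁))
            (measure_mono (hthick _ hle₂))) le_rfl
  exact ⟨combine (left_measure_le_of_levyProkhorovEDist_lt hlt₁ hB)
      (left_measure_le_of_levyProkhorovEDist_lt hlt₂ hB),
    combine (right_measure_le_of_levyProkhorovEDist_lt hlt₁ hB)
      (right_measure_le_of_levyProkhorovEDist_lt hlt₂ hB)⟩

lemma levyProkhorovEDist_sum_le {ι : Type*} (s : Finset ι) (μ ν : ι → Measure Ω) :
    levyProkhorovEDist (∑ i ∈ s, μ i) (∑ i ∈ s, ν i) ≤ ∑ i ∈ s, levyProkhorovEDist (μ i) (ν i) := by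
  classical
  induction s using Finset.induction_on with
  | empty => simp
  | insert i s hi ih =>
    rw [Finset.sum_insert hi, Finset.sum_insert hi, Finset.sum_insert hi]
    exact (levyProkhorovEDist_add_le _ _ _ _).trans (add_le_add_right ih _)

lemma levyProkhorovEDist_map_le_of_forall_edist_le [OpensMeasurableSpace Ω] {α : Type*}
    [MeasurableSpace α] (μ : Measure α) {X Y : α → Ω} (hX : Measurable X) (hY : Measurable Y) {η : ℝ≥0∞}
    (h : ∀ a, edist (X a) (Y a) ≤ η) :
    levyProkhorovEDist (μ.map X) (μ.map Y) ≤ η := by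
  apply levyProkhorovEDist_le_of_forall
  intro ε B hε hε_top hB
  have hthick : MeasurableSet (thickening ε.toReal B) := isOpen_thickening.measurableSet
  have hsub : ∀ X' Y' : α → Ω, (∀ a, edist (X' a) (Y' a) ≤ η) →
      X' ⁻¹' B ⊆ Y' ⁻¹' thickening ε.toReal B := fun X' Y' h' a ha =>
    (mem_thickening_iff_exists_edist_lt _ _).2
      ⟨X' a, ha, by rw [edist_comm, ENNReal.ofReal_toReal hε_top.ne]; exact (h' a).trans_lt hε⟩
  rw [Measure.map_apply hX hB, Measure.map_apply hY hB, Measure.map_apply hX hthick,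
    Measure.map_apply hY hthick]
  exact ⟨le_add_right (measure_mono (hsub X Y h)),
    le_add_right (measure_mono (hsub Y X fun a => (edist_comm _ _).trans_le (h a)))⟩

lemma levyProkhorovEDist_map_le_of_lipschitzWith {Ω' : Type*} [MeasurableSpace Ω']
    [PseudoEMetricSpace Ω'] [OpensMeasurableSpace Ω'] {e : Ω → Ω'} (he : LipschitzWith 1 e)
    (he_meas : Measurable e) (μ ν : Measure Ω) :
    levyProkhorovEDist (μ.map e) (ν.map e) ≤ levyProkhorovEDist μ ν := by
  apply levyProkhorovEDist_le_of_forall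
  intro ε B hε _ hB
  have hthick : thickening ε.toReal (e ⁻¹' B) ⊆ e ⁻¹' thickening ε.toReal B := fun x hx => by
    obtain ⟨y, hy, hxy⟩ := (mem_thickening_iff_exists_edist_lt _ _).1 hx
    exact (mem_thickening_iff_exists_edist_lt _ _).2
      ⟨e y, hy, (he.edist_le_mul x y).trans_lt (by simpa using hxy)⟩
  have hB' : MeasurableSet (thickening ε.toReal B) := isOpen_thickening.measurableSet
  rw [Measure.map_apply he_meas hB, Measure.map_apply he_meas hB, Measure.map_apply he_meas hB',
    Measure.map_apply he_meas hB']
  exact ⟨(left_measure_le_of_levyProkhorovEDist_lt hε (he_meas hB)).trans (by gcongr),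
    (right_measure_le_of_levyProkhorovEDist_lt hε (he_meas hB)).trans (by gcongr)⟩

end MeasureTheory

def profileVec {k : ℕ} (a b : Fin k → ℝ) (w : ℝ) : RE (2 * k + 1) :=
  (WithLp.equiv 2 (Fin (2 * k + 1) → ℝ)).symm fun i =>
    if _ : (i : ℕ) < 2 * k then
      if (i : ℕ) % 2 = 0 then a ⟨(i : ℕ) / 2, by omega⟩
      else b ⟨(i : ℕ) / 2, by omega⟩
    else w

lemma sVec_eq_profileVec {Ω₁ Ω₂ : Type*} (k : ℕ) (f : Fin k → Ω₁ → ℝ)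
    (W : Ω₁ × Ω₁ × Ω₂ → ℝ) (z : Ω₁ × Ω₁ × Ω₂) :
    sVec k f W z = profileVec (fun i => f i z.1) (fun i => f i z.2.1) (W z) := rfl

lemma EuclideanSpace.dist_le_sqrt_card_mul {ι : Type*} [Fintype ι] {x y : EuclideanSpace ℝ ι}
    {m : ℝ} (hm : 0 ≤ m) (h : ∀ i, dist (x i) (y i) ≤ m) :
    dist x y ≤ √(Fintype.card ι) * m := by
  rw [EuclideanSpace.dist_eq, ← Real.sqrt_sq hm, ← Real.sqrt_mul (Nat.cast_nonneg _)]
  gcongr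
  calc ∑ i, dist (x i) (y i) ^ 2 ≤ ∑ _i : ι, m ^ 2 :=
        Finset.sum_le_sum fun i _ => pow_le_pow_left₀ dist_nonneg (h i) 2
    _ = Fintype.card ι * m ^ 2 := by simp

lemma dist_sVec_le {Ω₁ Ω₂ : Type*} {k : ℕ} {f g : Fin k → Ω₁ → ℝ} {m : ℝ} (hm : 0 ≤ m)
    (hfg : ∀ i x, |f i x - g i x| ≤ m) (W : Ω₁ × Ω₁ × Ω₂ → ℝ) (z : Ω₁ × Ω₁ × Ω₂) :
    dist (sVec k f W z) (sVec k g W z) ≤ √(2 * k + 1) * m := by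
  have h := EuclideanSpace.dist_le_sqrt_card_mul hm (x := sVec k f W z) (y := sVec k g W z)
    fun i => by
      simp only [sVec, WithLp.equiv_symm_apply, PiLp.toLp_apply, Real.dist_eq]
      split_ifs
      · exact hfg _ _
      · exact hfg _ _
      · simpa using hm
  simpa using h

lemma lipschitzWith_profileVec {k : ℕ} (a b : Fin k → ℝ) : LipschitzWith 1 (profileVec a b) := by
  refine LipschitzWith.of_dist_le_mul fun w w' => ?_
  rw [EuclideanSpace.dist_eq, Finset.sum_eq_single (Fin.last (2 * k))]
  · simp [profileVec, Real.sqrt_sq_eq_abs, Real.dist_eq]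
  · intro i _ hi
    have : (i : ℕ) < 2 * k := by simpa using Fin.val_lt_last hi
    simp [profileVec, this]
  · simp

lemma measurable_sVec {Ω₁ Ω₂ : Type*} [MeasurableSpace Ω₁] [MeasurableSpace Ω₂]
    {k : ℕ} {f : Fin k → Ω₁ → ℝ} (hf : ∀ i, Measurable (f i))
    {W : Ω₁ × Ω₁ × Ω₂ → ℝ} (hW : Measurable W) :
    Measurable (sVec k f W) := by
  refine (WithLp.measurable_toLp 2 _).comp (measurable_pi_lambda _ fun i => ?_)
  split_ifs
  · exact (hf _).comp measurable_fst
  · exact (hf _).comp (measurable_fst.comp measurable_snd)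
  · exact hW

def gridIndex (M : ℕ) (t : ℝ) : Fin (2 * M + 1) :=
  ⟨min (2 * M) ⌊(t + 1) * M⌋₊, by omega⟩

def gridPoint (M : ℕ) (i : Fin (2 * M + 1)) : ℝ := i / M - 1

lemma measurable_gridIndex (M : ℕ) : Measurable (gridIndex M) :=
  (measurable_from_top (f := fun n : ℕ => (⟨min (2 * M) n, by omega⟩ : Fin (2 * M + 1)))).comp
    (Nat.measurable_floor.comp (by fun_prop))

lemma abs_sub_gridPoint_gridIndex_le {M : ℕ} (hM : 0 < M) {t : ℝ} (ht : t ∈ Icc (-1 : ℝ) 1) :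
    |t - gridPoint M (gridIndex M t)| ≤ 1 / M := by
  have hM' : (0 : ℝ) < M := Nat.cast_pos.2 hM
  set s := (t + 1) * M
  have hs : 0 ≤ s := mul_nonneg (by linarith [ht.1]) hM'.le
  have hfloor : ⌊s⌋₊ ≤ 2 * M := Nat.floor_le_of_le (by push_cast; nlinarith [ht.2])
  have hidx : ((gridIndex M t : ℕ) : ℝ) = ⌊s⌋₊ := by simp [gridIndex, s, hfloor]
  have hsub : t - gridPoint M (gridIndex M t) = (s - ⌊s⌋₊) / M := by
    rw [gridPoint, hidx]
    field_simp
    ring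
  rw [hsub, abs_of_nonneg (div_nonneg (by linarith [Nat.floor_le hs]) hM'.le)]
  gcongr
  linarith [Nat.lt_floor_add_one s]

section Graphon

variable {Ω₂ : Type*} [MeasurableSpace Ω₂] (P₂ : Measure Ω₂)

lemma assocGraphon_apply {W : unitInterval × unitInterval × Ω₂ → ℝ} (hW : Measurable W)
    (x : unitInterval × unitInterval) {B : Set ℝ} (hB : MeasurableSet B) :
    assocGraphon P₂ W x B = P₂ {ω | W (x.1, x.2, ω) ∈ B} :=
  Measure.map_apply (by fun_prop) hB

lemma measurable_assocGraphon [SFinite P₂] {W : unitInterval × unitInterval × Ω₂ → ℝ}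
    (hW : Measurable W) : Measurable (assocGraphon P₂ W) := by
  refine Measure.measurable_measure.2 fun B hB => ?_
  simp_rw [assocGraphon_apply P₂ hW _ hB]
  exact measurable_measure_prodMk_left ((hW.comp (by fun_prop) :
    Measurable fun p : (unitInterval × unitInterval) × Ω₂ => W (p.1.1, p.1.2, p.2)) hB)

lemma map_restrict_eq_graphonInt [SFinite P₂] {W : unitInterval × unitInterval × Ω₂ → ℝ}
    (hW : Measurable W) {S T : Set unitInterval} :
    (((volume : Measure unitInterval).prod ((volume : Measure unitInterval).prod P₂)).restrict
        (S ×ˢ T ×ˢ univ)).map W = graphonInt (assocGraphon P₂ W) (S ×ˢ T) := by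
  ext B hB
  have hK := measurable_assocGraphon P₂ hW
  have hrestrict : ((volume : Measure unitInterval).prod
      ((volume : Measure unitInterval).prod P₂)).restrict (S ×ˢ T ×ˢ univ) =
      (volume.restrict S).prod ((volume.restrict T).prod P₂) := by
    rw [← Measure.prod_restrict, ← Measure.prod_restrict, Measure.restrict_univ]
  rw [Measure.map_apply hW hB, graphonInt, Measure.bind_apply hB hK.aemeasurable, hrestrict,
    ← Measure.prod_restrict, Measure.prod_apply (hW hB),
    lintegral_prod (fun x => assocGraphon P₂ W x B)
      ((Measure.measurable_coe hB).comp hK).aemeasurable]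
  refine lintegral_congr fun x => ?_
  rw [Measure.prod_apply (measurable_prodMk_left (hW hB))]
  refine lintegral_congr fun y => ?_
  rw [assocGraphon_apply P₂ hW _ hB]
  rfl

lemma levyProkhorovEDist_graphonInt_le_one [IsProbabilityMeasure P₂]
    {U V : unitInterval × unitInterval × Ω₂ → ℝ} (hU : Measurable U) (hV : Measurable V)
    (A : Set (unitInterval × unitInterval)) :
    levyProkhorovEDist (graphonInt (assocGraphon P₂ U) A) (graphonInt (assocGraphon P₂ V) A)
      ≤ 1 := by
  have huniv : ∀ {W : unitInterval × unitInterval × Ω₂ → ℝ}, Measurable W →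
      graphonInt (assocGraphon P₂ W) A univ ≤ 1 := fun {W} hW => by
    rw [graphonInt, Measure.bind_apply MeasurableSet.univ
      (measurable_assocGraphon P₂ hW).aemeasurable]
    simp only [assocGraphon_apply P₂ hW _ MeasurableSet.univ, mem_univ, ofPred_true, measure_univ,
      lintegral_one, Measure.restrict_apply_univ]
    exact prob_le_one
  exact (levyProkhorovEDist_le_max_measure_univ _ _).trans (max_le (huniv hU) (huniv hV))

end Graphon

lemma levyProkhorovEDist_Smeasure_le_of_abs_sub_le {Ω₁ Ω₂ : Type*} [MeasurableSpace Ω₁]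
    [MeasurableSpace Ω₂] (P₁ : Measure Ω₁) (P₂ : Measure Ω₂) {k : ℕ} {f g : Fin k → Ω₁ → ℝ}
    (hf : ∀ i, Measurable (f i)) (hg : ∀ i, Measurable (g i)) {W : Ω₁ × Ω₁ × Ω₂ → ℝ}
    (hW : Measurable W) {m : ℝ} (hm : 0 ≤ m) (hfg : ∀ i x, |f i x - g i x| ≤ m) :
    levyProkhorovEDist (Smeasure P₁ P₂ f W) (Smeasure P₁ P₂ g W) ≤
      ENNReal.ofReal (√(2 * k + 1) * m) :=
  levyProkhorovEDist_map_le_of_forall_edist_le _ (measurable_sVec hf hW) (measurable_sVec hg hW)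
    fun z => (edist_le_ofReal (by positivity)).2 (dist_sVec_le hm hfg W z)

section StepProfile

variable {Ω₂ : Type*} [MeasurableSpace Ω₂] (P₂ : Measure Ω₂) [SFinite P₂]
  {ι : Type*} [Fintype ι] [MeasurableSpace ι] [MeasurableSingletonClass ι] {π : unitInterval → ι}

lemma Smeasure_step_eq_sum (hπ : Measurable π) {k : ℕ} (c : ι → Fin k → ℝ)
    {W : unitInterval × unitInterval × Ω₂ → ℝ} (hW : Measurable W) :
    Smeasure volume P₂ (fun i x => c (π x) i) W =
      ∑ q : ι × ι, (graphonInt (assocGraphon P₂ W) ((π ⁻¹' {q.1}) ×ˢ (π ⁻¹' {q.2}))).map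
        (profileVec (c q.1) (c q.2)) := by
  set box : ι × ι → Set (unitInterval × unitInterval × Ω₂) :=
    fun q => (π ⁻¹' {q.1}) ×ˢ (π ⁻¹' {q.2}) ×ˢ univ
  have hbox : ∀ q, MeasurableSet (box q) := fun q =>
    (hπ (measurableSet_singleton _)).prod ((hπ (measurableSet_singleton _)).prod .univ)
  have hdisj : Pairwise (Function.onFun Disjoint box) := fun q q' hne => Set.disjoint_left.2
    fun z ⟨h₁, h₂, _⟩ ⟨h₁', h₂', _⟩ => hne (Prod.ext (h₁.symm.trans h₁') (h₂.symm.trans h₂'))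
  have hcover : ⋃ q, box q = univ :=
    eq_univ_of_forall fun z => mem_iUnion.2 ⟨(π z.1, π z.2.1), rfl, rfl, trivial⟩
  have hsVec := measurable_sVec (k := k) (f := fun i x => c (π x) i)
    (fun i => (measurable_of_finite (fun j => c j i)).comp hπ) hW
  rw [Smeasure, ← Measure.restrict_univ (μ := volume.prod _), ← hcover,
    Measure.restrict_iUnion hdisj hbox, Measure.map_sum hsVec.aemeasurable, Measure.sum_fintype]
  refine Finset.sum_congr rfl fun q _ => ?_
  have he := (lipschitzWith_profileVec (c q.1) (c q.2)).continuous.measurable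
  rw [← map_restrict_eq_graphonInt P₂ hW, Measure.map_map he hW]
  refine Measure.map_congr (ae_restrict_of_forall_mem (hbox q) ?_)
  rintro z ⟨h₁, h₂, -⟩
  simp only [Function.comp_apply, sVec_eq_profileVec]
  rw [show π z.1 = q.1 from h₁, show π z.2.1 = q.2 from h₂]

lemma levyProkhorovEDist_Smeasure_step_le (hπ : Measurable π) {k : ℕ} (c : ι → Fin k → ℝ)
    {U V : unitInterval × unitInterval × Ω₂ → ℝ} (hU : Measurable U) (hV : Measurable V)
    {δ : ℝ≥0∞} (hUV : ∀ S T : Set unitInterval, MeasurableSet S → MeasurableSet T →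
      levyProkhorovEDist (graphonInt (assocGraphon P₂ U) (S ×ˢ T))
        (graphonInt (assocGraphon P₂ V) (S ×ˢ T)) ≤ δ) :
    levyProkhorovEDist (Smeasure volume P₂ (fun i x => c (π x) i) U)
      (Smeasure volume P₂ (fun i x => c (π x) i) V) ≤ Fintype.card (ι × ι) * δ := by
  rw [Smeasure_step_eq_sum P₂ hπ c hU, Smeasure_step_eq_sum P₂ hπ c hV]
  refine (levyProkhorovEDist_sum_le _ _ _).trans ?_
  calc _ ≤ ∑ _q : ι × ι, δ := Finset.sum_le_sum fun q _ =>
        (levyProkhorovEDist_map_le_of_lipschitzWith (lipschitzWith_profileVec _ _)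
          (lipschitzWith_profileVec _ _).continuous.measurable _ _).trans
        (hUV _ _ (hπ (measurableSet_singleton _)) (hπ (measurableSet_singleton _)))
    _ = Fintype.card (ι × ι) * δ := by simp

end StepProfile

lemma exists_pos_levyProkhorovEDist_Smeasure_le {Ω₂ : Type*} [MeasurableSpace Ω₂]
    (P₂ : Measure Ω₂) [SFinite P₂] (k : ℕ) {ε : ℝ} (hε : 0 < ε) :
    ∃ δ : ℝ, 0 < δ ∧ ∀ U V : unitInterval × unitInterval × Ω₂ → ℝ, Measurable U → Measurable V →
      (∀ S T : Set unitInterval, MeasurableSet S → MeasurableSet T →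
        levyProkhorovEDist (graphonInt (assocGraphon P₂ U) (S ×ˢ T))
          (graphonInt (assocGraphon P₂ V) (S ×ˢ T)) ≤ ENNReal.ofReal δ) →
      ∀ f : Fin k → unitInterval → ℝ, (∀ i, Measurable (f i)) →
        (∀ i x, f i x ∈ Icc (-1 : ℝ) 1) →
        levyProkhorovEDist (Smeasure volume P₂ f U) (Smeasure volume P₂ f V) ≤
          ENNReal.ofReal ε := by
  -- Rounding to the grid costs `ε / 4` at each end, the `N` cells cost `ε / 2` in the middle.
  obtain ⟨M, hM⟩ := exists_nat_gt (4 * √(2 * k + 1) / ε)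
  have hM0 : (0 : ℝ) < M := lt_of_le_of_lt (by positivity) hM
  have hsnap : √(2 * k + 1) * (1 / M) ≤ ε / 4 := by
    rw [div_lt_iff₀ hε] at hM
    rw [mul_one_div, div_le_iff₀ hM0]
    linarith
  set N := Fintype.card ((Fin k → Fin (2 * M + 1)) × (Fin k → Fin (2 * M + 1)))
  have hN : (N : ℝ) * (ε / (2 * (N + 1))) ≤ ε / 2 := by
    rw [mul_div_assoc', div_le_div_iff₀ (by positivity) (by positivity)]
    nlinarith
  refine ⟨ε / (2 * (N + 1)), by positivity, fun U V hU hV hUV f hf hIcc => ?_⟩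
  set π : unitInterval → Fin k → Fin (2 * M + 1) := fun x i => gridIndex M (f i x)
  have hπ : Measurable π := measurable_pi_lambda _ fun i => (measurable_gridIndex M).comp (hf i)
  set c : (Fin k → Fin (2 * M + 1)) → Fin k → ℝ := fun j i => gridPoint M (j i)
  have hstep := levyProkhorovEDist_Smeasure_step_le P₂ hπ c hU hV hUV
  set g : Fin k → unitInterval → ℝ := fun i x => c (π x) i
  have hg : ∀ i, Measurable (g i) := fun i => (measurable_of_finite fun j => c j i).comp hπ
  have hfg : ∀ i x, |f i x - g i x| ≤ 1 / M := fun i x =>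
    abs_sub_gridPoint_gridIndex_le (Nat.cast_pos.1 hM0) (hIcc i x)
  have hU' := levyProkhorovEDist_Smeasure_le_of_abs_sub_le volume P₂ hf hg hU (by positivity) hfg
  have hV' := levyProkhorovEDist_Smeasure_le_of_abs_sub_le volume P₂ hf hg hV (by positivity) hfg
  rw [levyProkhorovEDist_comm] at hV'
  calc levyProkhorovEDist (Smeasure volume P₂ f U) (Smeasure volume P₂ f V)
      ≤ levyProkhorovEDist (Smeasure volume P₂ f U) (Smeasure volume P₂ g U)
        + levyProkhorovEDist (Smeasure volume P₂ g U) (Smeasure volume P₂ g V)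
        + levyProkhorovEDist (Smeasure volume P₂ g V) (Smeasure volume P₂ f V) :=
        (levyProkhorovEDist_triangle _ _ _).trans
          (add_le_add (levyProkhorovEDist_triangle _ _ _) le_rfl)
    _ ≤ ENNReal.ofReal (ε / 4) + ENNReal.ofReal (N * (ε / (2 * (N + 1)))) +
          ENNReal.ofReal (ε / 4) := by
        rw [ENNReal.ofReal_mul (Nat.cast_nonneg N), ENNReal.ofReal_natCast]
        exact add_le_add (add_le_add (hU'.trans (ENNReal.ofReal_le_ofReal hsnap)) hstep)
          (hV'.trans (ENNReal.ofReal_le_ofReal hsnap))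
    _ ≤ ENNReal.ofReal ε := by
        rw [← ENNReal.ofReal_add (by positivity) (by positivity),
          ← ENNReal.ofReal_add (by positivity) (by positivity)]
        exact ENNReal.ofReal_le_ofReal (by linarith)

lemma eHausLP_le_of_forall_exists {X : Type*} [MeasurableSpace X] [PseudoEMetricSpace X]
    {A B : Set (Measure X)} {c : ℝ≥0∞} (hAB : ∀ μ ∈ A, ∃ ν ∈ B, levyProkhorovEDist μ ν ≤ c)
    (hBA : ∀ ν ∈ B, ∃ μ ∈ A, levyProkhorovEDist μ ν ≤ c) : eHausLP A B ≤ c :=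
  max_le (iSup₂_le fun μ hμ => let ⟨ν, hν, h⟩ := hAB μ hμ; iInf₂_le_of_le ν hν h)
    (iSup₂_le fun ν hν => let ⟨μ, hμ, h⟩ := hBA ν hν; iInf₂_le_of_le μ hμ h)

section Profile

variable {Ω₁ Ω₂ : Type*} [MeasurableSpace Ω₁] [MeasurableSpace Ω₂] (P₁ : Measure Ω₁)
  (P₂ : Measure Ω₂)

lemma dHLP_SkSet_le_of_forall {k : ℕ} {W W' : Ω₁ × Ω₁ × Ω₂ → ℝ} {ε : ℝ} (hε : 0 ≤ ε)
    (h : ∀ f : Fin k → Ω₁ → ℝ, (∀ i, Measurable (f i)) → (∀ i x, f i x ∈ Icc (-1 : ℝ) 1) →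
      levyProkhorovEDist (Smeasure P₁ P₂ f W) (Smeasure P₁ P₂ f W') ≤ ENNReal.ofReal ε) :
    dHLP (SkSet P₁ P₂ k W) (SkSet P₁ P₂ k W') ≤ ε :=
  ENNReal.toReal_le_of_le_ofReal hε <| eHausLP_le_of_forall_exists
    (fun _ ⟨f, hf, hI, hμ⟩ => ⟨_, ⟨f, hf, hI, rfl⟩, hμ ▸ h f hf hI⟩)
    (fun _ ⟨f, hf, hI, hν⟩ => ⟨_, ⟨f, hf, hI, rfl⟩, hν ▸ h f hf hI⟩)

lemma dHLP_SkSet_le_one [IsProbabilityMeasure P₁] [IsProbabilityMeasure P₂] {k : ℕ}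
    {W W' : Ω₁ × Ω₁ × Ω₂ → ℝ} (hW : Measurable W) (hW' : Measurable W') :
    dHLP (SkSet P₁ P₂ k W) (SkSet P₁ P₂ k W') ≤ 1 := by
  refine dHLP_SkSet_le_of_forall P₁ P₂ zero_le_one fun f hf _ => ?_
  have huniv : ∀ {V : Ω₁ × Ω₁ × Ω₂ → ℝ}, Measurable V → Smeasure P₁ P₂ f V univ = 1 :=
    fun hV => by rw [Smeasure, Measure.map_apply (measurable_sVec hf hV) .univ]; simp
  refine (levyProkhorovEDist_le_max_measure_univ _ _).trans ?_
  simp [huniv hW, huniv hW']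

lemma Smeasure_comp_measurePreserving [SFinite P₁] [SFinite P₂] {φ : Ω₁ → Ω₁}
    (hφ : MeasurePreserving φ P₁ P₁) {k : ℕ} {f : Fin k → Ω₁ → ℝ} (hf : ∀ i, Measurable (f i))
    {W : Ω₁ × Ω₁ × Ω₂ → ℝ} (hW : Measurable W) :
    Smeasure P₁ P₂ (fun i => f i ∘ φ) (fun z => W (φ z.1, φ z.2.1, z.2.2)) =
      Smeasure P₁ P₂ f W := by
  have hΦ : MeasurePreserving (fun z : Ω₁ × Ω₁ × Ω₂ => (φ z.1, φ z.2.1, z.2.2))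
      (P₁.prod (P₁.prod P₂)) (P₁.prod (P₁.prod P₂)) := hφ.prod (hφ.prod (.id P₂))
  rw [Smeasure, Smeasure]
  conv_rhs => rw [← hΦ.map_eq, Measure.map_map (measurable_sVec hf hW) hΦ.measurable]
  rfl

lemma SkSet_comp_measurePreserving [SFinite P₁] [SFinite P₂] {φ : Ω₁ ≃ᵐ Ω₁}
    (hφ : MeasurePreserving φ P₁ P₁) (k : ℕ) {W : Ω₁ × Ω₁ × Ω₂ → ℝ} (hW : Measurable W) :
    SkSet P₁ P₂ k (fun z => W (φ z.1, φ z.2.1, z.2.2)) = SkSet P₁ P₂ k W := by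
  ext μ
  constructor
  · rintro ⟨f, hf, hI, rfl⟩
    have hf' : ∀ i, Measurable (f i ∘ φ.symm) := fun i => (hf i).comp φ.symm.measurable
    refine ⟨fun i => f i ∘ φ.symm, hf', fun i x => hI i _, ?_⟩
    rw [← Smeasure_comp_measurePreserving P₁ P₂ hφ hf' hW]
    simp [Function.comp_def]
  · rintro ⟨f, hf, hI, rfl⟩
    exact ⟨fun i => f i ∘ φ, fun i => (hf i).comp φ.measurable, fun i x => hI i _,
      (Smeasure_comp_measurePreserving P₁ P₂ hφ hf hW).symm⟩

end Profile

section CutDistance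

variable {Ω₂ : Type*} [MeasurableSpace Ω₂] (P₂ : Measure Ω₂) [IsProbabilityMeasure P₂]

lemma exists_measurePreserving_levyProkhorovEDist_lt_of_unlabCutDist_lt
    {U V : unitInterval × unitInterval × Ω₂ → ℝ} (hU : Measurable U) (hV : Measurable V) {d : ℝ}
    (h : unlabCutDist (assocGraphon P₂ U) (assocGraphon P₂ V) < d) :
    ∃ φ : unitInterval ≃ᵐ unitInterval, MeasurePreserving φ volume volume ∧
      ∀ S T : Set unitInterval, MeasurableSet S → MeasurableSet T →
        levyProkhorovEDist (graphonInt (assocGraphon P₂ U) (S ×ˢ T))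
          (graphonInt (assocGraphon P₂ fun z => V (φ z.1, φ z.2.1, z.2.2)) (S ×ˢ T)) <
          ENNReal.ofReal d := by
  have : Nonempty {φ : unitInterval ≃ᵐ unitInterval // MeasurePreserving φ volume volume} :=
    ⟨⟨.refl _, .id _⟩⟩
  obtain ⟨⟨φ, hφ⟩, hφd⟩ := exists_lt_of_ciInf_lt h
  refine ⟨φ, hφ, fun S T hS hT => ?_⟩
  have hVφ : Measurable fun z : unitInterval × unitInterval × Ω₂ => V (φ z.1, φ z.2.1, z.2.2) :=
    hV.comp (by fun_prop)
  have hle := levyProkhorovEDist_graphonInt_le_one P₂ hU hVφ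
  have hbdd : BddAbove (range fun p : {S : Set unitInterval // MeasurableSet S} ×
      {T : Set unitInterval // MeasurableSet T} =>
      levyProkhorovDist (graphonInt (assocGraphon P₂ U) (p.1.1 ×ˢ p.2.1))
        (graphonInt (assocGraphon P₂ fun z => V (φ z.1, φ z.2.1, z.2.2)) (p.1.1 ×ˢ p.2.1))) :=
    ⟨1, by
      rintro _ ⟨p, rfl⟩
      exact ENNReal.toReal_le_of_le_ofReal zero_le_one (ENNReal.ofReal_one ▸ hle _)⟩
  rw [ENNReal.lt_ofReal_iff_toReal_lt (ne_top_of_le_ne_top ENNReal.one_ne_top (hle _))]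
  exact (le_ciSup hbdd ⟨⟨S, hS⟩, ⟨T, hT⟩⟩).trans_lt hφd

lemma exists_pos_dHLP_SkSet_le_of_unlabCutDist_lt (k : ℕ) {ε : ℝ} (hε : 0 < ε) :
    ∃ δ > 0, ∀ U V : unitInterval × unitInterval × Ω₂ → ℝ, Measurable U → Measurable V →
      unlabCutDist (assocGraphon P₂ U) (assocGraphon P₂ V) < δ →
      dHLP (SkSet volume P₂ k U) (SkSet volume P₂ k V) ≤ ε := by
  obtain ⟨δ, hδ, hδspec⟩ := exists_pos_levyProkhorovEDist_Smeasure_le P₂ k hε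
  refine ⟨δ, hδ, fun U V hU hV hUV => ?_⟩
  obtain ⟨φ, hφ, hcut⟩ :=
    exists_measurePreserving_levyProkhorovEDist_lt_of_unlabCutDist_lt P₂ hU hV hUV
  rw [← SkSet_comp_measurePreserving volume P₂ hφ k hV]
  exact dHLP_SkSet_le_of_forall volume P₂ hε.le <| hδspec U _ hU (hV.comp (by fun_prop))
    fun S T hS hT => (hcut S T hS hT).le

end CutDistance

lemma tsum_inv_two_pow_succ_mul_le {d : ℕ → ℝ} (h0 : ∀ k, 0 ≤ d k) (h1 : ∀ k, d k ≤ 1)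
    {n : ℕ} {η : ℝ} (hη : 0 ≤ η) (hd : ∀ k < n, d k ≤ η) :
    ∑' k, (2 : ℝ)⁻¹ ^ (k + 1) * d k ≤ η + 2⁻¹ ^ n := by
  have hgeo : HasSum (fun k : ℕ => (2 : ℝ)⁻¹ ^ (k + 1)) 1 := by
    simpa [pow_succ] using (hasSum_geometric_two).mul_right (2 : ℝ)⁻¹
  have hs : Summable fun k => (2 : ℝ)⁻¹ ^ (k + 1) * d k :=
    hgeo.summable.of_nonneg_of_le (fun k => mul_nonneg (by positivity) (h0 k))
      fun k => mul_le_of_le_one_right (by positivity) (h1 k)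
  rw [← hs.sum_add_tsum_nat_add n]
  gcongr
  · calc ∑ k ∈ Finset.range n, (2 : ℝ)⁻¹ ^ (k + 1) * d k
        ≤ ∑ k ∈ Finset.range n, (2 : ℝ)⁻¹ ^ (k + 1) * η :=
          Finset.sum_le_sum fun k hk => by gcongr; exact hd k (Finset.mem_range.1 hk)
      _ ≤ 1 * η := by
          rw [← Finset.sum_mul]
          gcongr
          exact hgeo.tsum_eq ▸ hgeo.summable.sum_le_tsum _ fun k _ => by positivity
      _ = η := one_mul η
  · calc ∑' k, (2 : ℝ)⁻¹ ^ (k + n + 1) * d (k + n)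
        ≤ ∑' k, (2 : ℝ)⁻¹ ^ n * (2 : ℝ)⁻¹ ^ (k + 1) :=
          (hs.comp_injective (add_left_injective n)).tsum_le_tsum (fun k => by
            rw [← pow_add, show n + (k + 1) = k + n + 1 by ring]
            exact mul_le_of_le_one_right (by positivity) (h1 _)) (hgeo.summable.mul_left _)
      _ = 2⁻¹ ^ n := by rw [tsum_mul_left, hgeo.tsum_eq, mul_one]

section PVarMetric

variable {Ω₂ : Type*} [MeasurableSpace Ω₂] (P₂ : Measure Ω₂) [IsProbabilityMeasure P₂]

lemma exists_pos_dM_lt_of_unlabCutDist_lt {ε : ℝ} (hε : 0 < ε) :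
    ∃ δ > 0, ∀ (U V : unitInterval × unitInterval × Ω₂ → ℝ) (hU : Measurable U)
      (hV : Measurable V), unlabCutDist (assocGraphon P₂ U) (assocGraphon P₂ V) < δ →
      dM (PVar.ofUnitInterval P₂ U hU) (PVar.ofUnitInterval P₂ V hV) < ε := by
  obtain ⟨n, hn⟩ := exists_pow_lt_of_lt_one (half_pos hε) (by norm_num : (2⁻¹ : ℝ) < 1)
  choose δ hδ hδspec using fun k =>
    exists_pos_dHLP_SkSet_le_of_unlabCutDist_lt P₂ (k + 1) (by positivity : 0 < ε / 4)
  refine ⟨(Finset.range (n + 1)).inf' ⟨0, by simp⟩ δ,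
    (Finset.lt_inf'_iff _).2 fun k _ => hδ k, fun U V hU hV hUV => ?_⟩
  have hhead : ∀ k < n, dHLP (SkSet volume P₂ (k + 1) U) (SkSet volume P₂ (k + 1) V) ≤ ε / 4 :=
    fun k hk => hδspec k U V hU hV <|
      hUV.trans_le (Finset.inf'_le _ (Finset.mem_range.2 (by omega)))
  calc dM (PVar.ofUnitInterval P₂ U hU) (PVar.ofUnitInterval P₂ V hV)
      ≤ ε / 4 + 2⁻¹ ^ n :=
        tsum_inv_two_pow_succ_mul_le (fun _ => ENNReal.toReal_nonneg)
          (fun _ => dHLP_SkSet_le_one volume P₂ hU hV) (by positivity) hhead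
    _ < ε := by linarith

end PVarMetric

/-- If the probability graphons associated to a sequence of
P-variables on `[0,1] × [0,1] × Ω₂` form a Cauchy sequence for the unlabelled cut
distance `δ_□`, then the P-variables form a Cauchy sequence for the metric `d_M`. -/
theorem dM_cauchy_of_unlabCutDist_cauchy
    {Ω₂ : Type*} [MeasurableSpace Ω₂] (P₂ : Measure Ω₂) [IsProbabilityMeasure P₂]
    (W : ℕ → unitInterval × unitInterval × Ω₂ → ℝ) (hW : ∀ n, Measurable (W n))
    (hcauchy : ∀ ε > (0 : ℝ), ∃ N : ℕ, ∀ m ≥ N, ∀ n ≥ N,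
      unlabCutDist (assocGraphon P₂ (W m)) (assocGraphon P₂ (W n)) < ε) :
    ∀ ε > (0 : ℝ), ∃ N : ℕ, ∀ m ≥ N, ∀ n ≥ N,
      dM (PVar.ofUnitInterval P₂ (W m) (hW m))
         (PVar.ofUnitInterval P₂ (W n) (hW n)) < ε := by
  intro ε hε
  obtain ⟨δ, hδ, hδspec⟩ := exists_pos_dM_lt_of_unlabCutDist_lt P₂ hε
  obtain ⟨N, hN⟩ := hcauchy δ hδ
  exact ⟨N, fun m hm n hn => hδspec _ _ (hW m) (hW n) (hN m hm n hn)⟩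

end
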